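/- arXiv:1201.5273 — 4 statements merged into one kernel-verified Lean document; each statement's English description precedes it below -/
import Mathlib

section
/- Under the hypotheses E_{i-1}² ≤ A_i²(e_i)·μ_{i-1}², e_{i-1}²β_{i-1}² ≤ E_{i-1}², and μ_{i-1} ≤ ((i−1)/2)β_{i-1} (with β_{i-1} > 0), the pair (e_{i-1}, e_i) satisfies the ellipse inequality e_{i-1}²·(i²/4 − 1/4) + e_i²·((i−1)²/4) ≤ (i²/4)·((i−1)²/4). -/
/-! Chaining the hypotheses gives `e_{i-1}² β² (i²/4 − 1/4) ≤ (i²/4 − e_i²) ((i−1)/2)² β²`;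
cancelling `β² > 0` and moving `e_i²` to the left is exactly the ellipse inequality. -/

theorem sq_mul_le_of_sq_le_div_mul {x E μ β c d n : ℝ} (hd : 0 < d) (hn : 0 ≤ n) (hβ : 0 < β)
    (hμ : 0 ≤ μ) (hE : E ^ 2 ≤ n / d * μ ^ 2) (hx : x ^ 2 * β ^ 2 ≤ E ^ 2) (hμβ : μ ≤ c * β) :
    x ^ 2 * d ≤ n * c ^ 2 := by
  have hEd : E ^ 2 * d ≤ n * μ ^ 2 := by
    rwa [div_mul_eq_mul_div, le_div_iff₀ hd] at hE
  have hμ2 : μ ^ 2 ≤ (c * β) ^ 2 := pow_le_pow_left₀ hμ hμβ 2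
  refine le_of_mul_le_mul_right ?_ (pow_pos hβ 2)
  calc x ^ 2 * d * β ^ 2 = x ^ 2 * β ^ 2 * d := by ring
    _ ≤ E ^ 2 * d := mul_le_mul_of_nonneg_right hx hd.le
    _ ≤ n * μ ^ 2 := hEd
    _ ≤ n * (c * β) ^ 2 := mul_le_mul_of_nonneg_left hμ2 hn
    _ = n * c ^ 2 * β ^ 2 := by ring

/-- The ellipse inequality for a pair of neighboring error coefficients:
if `E_{i-1}² ≤ A_i²(e_i)·μ_{i-1}²`, `e_{i-1}²β_{i-1}² ≤ E_{i-1}²`,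
`μ_{i-1} ≤ ((i−1)/2)β_{i-1}` and `|e_i| ≤ i/2`, then
`e_{i-1}²(i²/4 − 1/4) + e_i²((i−1)²/4) ≤ (i²/4)((i−1)²/4)`. -/
theorem stmt8 (i : ℕ) (hi : 2 ≤ i) (ei eim Eim μim βim : ℝ)
    (hβim : 0 < βim) (hμim : 0 ≤ μim)
    (hei : |ei| ≤ (i : ℝ) / 2)
    (hA : Eim ^ 2 ≤ (((i : ℝ) ^ 2 / 4 - ei ^ 2) / ((i : ℝ) ^ 2 / 4 - 1 / 4)) * μim ^ 2)
    (heim : eim ^ 2 * βim ^ 2 ≤ Eim ^ 2)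
    (hμβ : μim ≤ (((i : ℝ) - 1) / 2) * βim) :
    eim ^ 2 * ((i : ℝ) ^ 2 / 4 - 1 / 4) + ei ^ 2 * (((i : ℝ) - 1) ^ 2 / 4)
      ≤ ((i : ℝ) ^ 2 / 4) * (((i : ℝ) - 1) ^ 2 / 4) := by
  have hi2 : (2 : ℝ) ≤ i := by exact_mod_cast hi
  have hd : 0 < (i : ℝ) ^ 2 / 4 - 1 / 4 := by nlinarith
  have hn : 0 ≤ (i : ℝ) ^ 2 / 4 - ei ^ 2 := by
    have := pow_le_pow_left₀ (abs_nonneg ei) hei 2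
    rw [sq_abs] at this
    linarith
  have key := sq_mul_le_of_sq_le_div_mul hd hn hβim hμim hA heim hμβ
  linear_combination key
end

section
/- Define C_{n+1}² := 1 and recursively C_{i-1}² := 1 if |e_{i-1}| < 1/2, and C_{i-1}² := C_i²·A_{i-1}²(e_{i-1}/C_i) otherwise, where A_j²(c) = (j²/4 − c²)/(j²/4 − 1/4). Suppose for indices i with i ≤ k that |e_j| ≥ 1/2 for all j = i,...,k and (k = n or |e_{k+1}| < 1/2), so C_{k+1} = 1. Then C_i² = (∏_{j=i}^{k} (j²/4)) / (∏_{j=i}^{k} (j²/4 − 1/4)) − Σ_{j=i+1}^{k} e_j²·(∏_{l=i}^{j-1} (l²/4)) / (∏_{l=i}^{j} (l²/4 − 1/4)) − e_i²/(i²/4 − 1/4). -/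
noncomputable def Tgt12 (e : ℕ → ℝ) (i k : ℕ) : ℝ :=
  (∏ j ∈ Finset.Icc i k, (j : ℝ) ^ 2 / 4) /
    (∏ j ∈ Finset.Icc i k, ((j : ℝ) ^ 2 / 4 - 1 / 4))
  - ∑ j ∈ Finset.Icc (i + 1) k, (e j) ^ 2 *
      (∏ l ∈ Finset.Icc i (j - 1), (l : ℝ) ^ 2 / 4) /
      (∏ l ∈ Finset.Icc i j, ((l : ℝ) ^ 2 / 4 - 1 / 4))
  - (e i) ^ 2 / ((i : ℝ) ^ 2 / 4 - 1 / 4)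

lemma icc_prod_bot (i k : ℕ) (h : i ≤ k) (f : ℕ → ℝ) :
    ∏ j ∈ Finset.Icc i k, f j = f i * ∏ j ∈ Finset.Icc (i + 1) k, f j := by
  rw [← Finset.Ico_add_one_right_eq_Icc, Finset.prod_eq_prod_Ico_succ_bot (by omega), Finset.Ico_add_one_right_eq_Icc]

lemma icc_sum_bot (i k : ℕ) (h : i ≤ k) (f : ℕ → ℝ) :
    ∑ j ∈ Finset.Icc i k, f j = f i + ∑ j ∈ Finset.Icc (i + 1) k, f j := by
  rw [← Finset.Ico_add_one_right_eq_Icc, Finset.sum_eq_sum_Ico_succ_bot (by omega), Finset.Ico_add_one_right_eq_Icc]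

lemma denom_ne (i : ℕ) (h : 2 ≤ i) : (i : ℝ) ^ 2 / 4 - 1 / 4 ≠ 0 := by
  have : (2 : ℝ) ≤ (i : ℝ) := by exact_mod_cast h
  nlinarith

lemma Q_ne (i k : ℕ) (h : 2 ≤ i) :
    (∏ l ∈ Finset.Icc i k, ((l : ℝ) ^ 2 / 4 - 1 / 4)) ≠ 0 := by
  rw [Finset.prod_ne_zero_iff]
  intro l hl
  exact denom_ne l (le_trans h (Finset.mem_Icc.mp hl).1)

set_option maxHeartbeats 2000000 in
lemma key_step (e : ℕ → ℝ) (i k : ℕ) (h2 : 2 ≤ i) (hik : i < k) :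
    (Tgt12 e (i + 1) k * ((i : ℝ) ^ 2 / 4) - (e i) ^ 2) / ((i : ℝ) ^ 2 / 4 - 1 / 4)
      = Tgt12 e i k := by
  have hb : ((i : ℝ) ^ 2 / 4 - 1 / 4) ≠ 0 := denom_ne i h2
  have hc : (((i : ℕ) + 1 : ℕ) : ℝ) ^ 2 / 4 - 1 / 4 ≠ 0 := denom_ne (i + 1) (by omega)
  have hQ' : (∏ l ∈ Finset.Icc (i + 1) k, ((l : ℝ) ^ 2 / 4 - 1 / 4)) ≠ 0 := Q_ne _ _ (by omega)
  unfold Tgt12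
  -- split products at bottom
  rw [icc_prod_bot i k (le_of_lt hik) (fun j => (j : ℝ) ^ 2 / 4),
      icc_prod_bot i k (le_of_lt hik) (fun j => (j : ℝ) ^ 2 / 4 - 1 / 4)]
  -- split sum for i at bottom element i+1
  rw [icc_sum_bot (i + 1) k (by omega) (fun j => (e j) ^ 2 *
      (∏ l ∈ Finset.Icc i (j - 1), (l : ℝ) ^ 2 / 4) /
      (∏ l ∈ Finset.Icc i j, ((l : ℝ) ^ 2 / 4 - 1 / 4)))]
  -- rewrite each remaining summand
  have hsum : ∑ j ∈ Finset.Icc (i + 1 + 1) k, (e j) ^ 2 *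
      (∏ l ∈ Finset.Icc i (j - 1), (l : ℝ) ^ 2 / 4) /
      (∏ l ∈ Finset.Icc i j, ((l : ℝ) ^ 2 / 4 - 1 / 4))
      = (((i : ℝ) ^ 2 / 4) / ((i : ℝ) ^ 2 / 4 - 1 / 4)) *
        ∑ j ∈ Finset.Icc (i + 1 + 1) k, (e j) ^ 2 *
          (∏ l ∈ Finset.Icc (i + 1) (j - 1), (l : ℝ) ^ 2 / 4) /
          (∏ l ∈ Finset.Icc (i + 1) j, ((l : ℝ) ^ 2 / 4 - 1 / 4)) := by
    rw [Finset.mul_sum]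
    refine Finset.sum_congr rfl ?_
    intro j hj
    obtain ⟨hj1, hj2⟩ := Finset.mem_Icc.mp hj
    have hQj : (∏ l ∈ Finset.Icc (i + 1) j, ((l : ℝ) ^ 2 / 4 - 1 / 4)) ≠ 0 :=
      Q_ne _ _ (by omega)
    rw [icc_prod_bot i (j - 1) (by omega) (fun l => (l : ℝ) ^ 2 / 4),
        icc_prod_bot i j (by omega) (fun l => (l : ℝ) ^ 2 / 4 - 1 / 4)]
    rw [div_mul_div_comm]
    congr 1
    ring
  -- first term of the split sum: Icc i (i+1-1) = {i}, Icc i (i+1)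
  have h1 : (∏ l ∈ Finset.Icc i (i + 1 - 1), (l : ℝ) ^ 2 / 4) = (i : ℝ) ^ 2 / 4 := by
    simp
  have h2' : (∏ l ∈ Finset.Icc i (i + 1), ((l : ℝ) ^ 2 / 4 - 1 / 4))
      = ((i : ℝ) ^ 2 / 4 - 1 / 4) * (((i : ℕ) + 1 : ℕ) ^ 2 / 4 - 1 / 4) := by
    rw [icc_prod_bot i (i + 1) (by omega) (fun l => (l : ℝ) ^ 2 / 4 - 1 / 4)]
    simp
  rw [hsum, h1, h2']
  set A := ∏ j ∈ Finset.Icc (i + 1) k, (j : ℝ) ^ 2 / 4 with hA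
  set B := ∏ j ∈ Finset.Icc (i + 1) k, ((j : ℝ) ^ 2 / 4 - 1 / 4) with hB
  set S := ∑ j ∈ Finset.Icc (i + 1 + 1) k, (e j) ^ 2 *
      (∏ l ∈ Finset.Icc (i + 1) (j - 1), (l : ℝ) ^ 2 / 4) /
      (∏ l ∈ Finset.Icc (i + 1) j, ((l : ℝ) ^ 2 / 4 - 1 / 4)) with hS
  clear_value A B S
  clear hsum hA hB hS h1 h2'
  generalize hcv : ((((i : ℕ) + 1 : ℕ) : ℝ) ^ 2 / 4 - 1 / 4) = c at hc ⊢
  generalize hbv : ((i : ℝ) ^ 2 / 4 - 1 / 4) = b at hb ⊢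
  generalize hav : ((i : ℝ) ^ 2 / 4) = a
  field_simp
  ring

/-- Closed form for the recursively defined factors `C_i²` (with
`C_{n+1}² = 1`, `C_{i-1}² = 1` if `|e_{i-1}| < 1/2` and
`C_{i-1}² = C_i²·A_{i-1}²(e_{i-1}/C_i) = (C_i²·(i-1)²/4 − e_{i-1}²)/((i-1)²/4 − 1/4)`
otherwise), assuming `|e_j| ≥ 1/2` for `j = i, …, k` and (`k = n` or `|e_{k+1}| < 1/2`). -/
theorem stmt12 (n : ℕ) (e Csq : ℕ → ℝ)
    (hCn : Csq (n + 1) = 1)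
    (hrec : ∀ j, 1 ≤ j → j ≤ n →
      Csq j = if |e j| < 1 / 2 then 1
        else (Csq (j + 1) * ((j : ℝ) ^ 2 / 4) - (e j) ^ 2) / ((j : ℝ) ^ 2 / 4 - 1 / 4))
    (i k : ℕ) (hi : 1 ≤ i) (hik : i ≤ k) (hkn : k ≤ n)
    (habs : ∀ j, i ≤ j → j ≤ k → 1 / 2 ≤ |e j|)
    (hk : k = n ∨ |e (k + 1)| < 1 / 2) :
    Csq i = (∏ j ∈ Finset.Icc i k, (j : ℝ) ^ 2 / 4) /
          (∏ j ∈ Finset.Icc i k, ((j : ℝ) ^ 2 / 4 - 1 / 4))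
        - ∑ j ∈ Finset.Icc (i + 1) k, (e j) ^ 2 *
            (∏ l ∈ Finset.Icc i (j - 1), (l : ℝ) ^ 2 / 4) /
            (∏ l ∈ Finset.Icc i j, ((l : ℝ) ^ 2 / 4 - 1 / 4))
        - (e i) ^ 2 / ((i : ℝ) ^ 2 / 4 - 1 / 4) := by
  -- C_{k+1} = 1
  have hCk1 : Csq (k + 1) = 1 := by
    rcases eq_or_lt_of_le hkn with h | h
    · rw [h]; exact hCn
    · rcases hk with h' | h'
      · rw [h']; exact hCn
      · rw [hrec (k + 1) (by omega) (by omega), if_pos h']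
  -- the recursion for j ∈ [i,k]
  have hstep : ∀ j, i ≤ j → j ≤ k →
      Csq j = (Csq (j + 1) * ((j : ℝ) ^ 2 / 4) - (e j) ^ 2) / ((j : ℝ) ^ 2 / 4 - 1 / 4) := by
    intro j hj1 hj2
    rw [hrec j (le_trans hi hj1) (by omega), if_neg (not_lt.mpr (habs j hj1 hj2))]
  show Csq i = Tgt12 e i k
  rcases eq_or_lt_of_le hi with h1 | h2
  · -- i = 1 : both sides are 0
    subst h1
    have hz : ((1 : ℕ) : ℝ) ^ 2 / 4 - 1 / 4 = 0 := by norm_num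
    have hL : Csq 1 = 0 := by rw [hstep 1 le_rfl hik, hz, div_zero]
    rw [hL]
    unfold Tgt12
    have hQ0 : (∏ j ∈ Finset.Icc 1 k, ((j : ℝ) ^ 2 / 4 - 1 / 4)) = 0 :=
      Finset.prod_eq_zero (Finset.mem_Icc.mpr ⟨le_rfl, hik⟩) hz
    rw [hQ0, div_zero, hz, div_zero]
    rw [Finset.sum_eq_zero]
    · norm_num
    · intro j hj
      obtain ⟨hj1, hj2⟩ := Finset.mem_Icc.mp hj
      have : (∏ l ∈ Finset.Icc 1 j, ((l : ℝ) ^ 2 / 4 - 1 / 4)) = 0 :=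
        Finset.prod_eq_zero (Finset.mem_Icc.mpr ⟨le_rfl, by omega⟩) hz
      rw [this, div_zero]
  · -- i ≥ 2 : reverse induction via induction on k - i
    have h2 : 2 ≤ i := h2
    have main : ∀ d j, i ≤ j → j ≤ k → k - j = d → Csq j = Tgt12 e j k := by
      intro d
      induction d with
      | zero =>
        intro j hj2 hjk hd
        have : j = k := by omega
        subst this
        rw [hstep j hj2 le_rfl, hCk1]
        unfold Tgt12
        rw [show Finset.Icc (j + 1) j = ∅ from Finset.Icc_eq_empty (by omega)]
        simp only [Finset.sum_empty, Finset.Icc_self, Finset.prod_singleton]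
        have hb := denom_ne j (by omega)
        field_simp
        ring
      | succ d ih =>
        intro j hj2 hjk hd
        have hjk' : j < k := by omega
        rw [hstep j hj2 (le_of_lt hjk'), ih (j + 1) (by omega) (by omega) (by omega)]
        exact key_step e j k (by omega) hjk'
    exact main (k - i) i le_rfl hik rfl
end

section
/- Under the recursive definition C_{n+1}² = 1, C_{i-1}² = 1 if |e_{i-1}| < 1/2 and C_{i-1}² = C_i²·A_{i-1}²(e_{i-1}/C_i) otherwise, and the hypotheses ‖e^{(i-1)}‖² = ‖e^{(i)}‖² − e_i²‖b_i^*‖², ‖e^{(i)}‖ ≤ μ^{(i)} whenever applicable, μ^{(i)2} − (1/4)‖b_i^*‖² ≤ μ^{(i-1)2}, and μ^{(i)} ≤ (i/2)‖b_i^*‖ for all i, one has ‖e^{(i-1)}‖² ≤ C_i²·μ^{(i-1)2} for all i = 2,...,n. In particular e_{i-1}² ≤ C_i²·((i−1)/2)². -/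
set_option maxHeartbeats 1000000


/-- Proposition 2 and Corollary 3 of the paper (abstract form): with the recursively defined
factors `C_i²`, the projected errors satisfy `‖e^{(i-1)}‖² ≤ C_i²·μ^{(i-1)2}` for all
`i = 2, …, n`, and in particular `e_{i-1}² ≤ C_i²·((i−1)/2)²`. -/
theorem stmt13 (n : ℕ) (e E β μ Csq : ℕ → ℝ)
    (hCn : Csq (n + 1) = 1)
    (hrec : ∀ j, 1 ≤ j → j ≤ n →
      Csq j = if |e j| < 1 / 2 then 1
        else (Csq (j + 1) * ((j : ℝ) ^ 2 / 4) - (e j) ^ 2) / ((j : ℝ) ^ 2 / 4 - 1 / 4))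
    (hE : ∀ i, 1 ≤ i → i ≤ n → E (i - 1) ^ 2 = E i ^ 2 - (e i) ^ 2 * (β i) ^ 2)
    (hEμ : ∀ i, i ≤ n → E i ≤ μ i)
    (hEpos : ∀ i, 0 ≤ E i) (hμpos : ∀ i, 0 ≤ μ i) (hβpos : ∀ i, 0 < β i)
    (hμμ : ∀ i, 1 ≤ i → i ≤ n → μ i ^ 2 - (1 / 4) * (β i) ^ 2 ≤ μ (i - 1) ^ 2)
    (hμβ : ∀ i, 1 ≤ i → i ≤ n → μ i ≤ ((i : ℝ) / 2) * β i) :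
    ∀ i, 2 ≤ i → i ≤ n →
      E (i - 1) ^ 2 ≤ Csq i * μ (i - 1) ^ 2 ∧
      (e (i - 1)) ^ 2 ≤ Csq i * (((i : ℝ) - 1) / 2) ^ 2 := by
  -- the downward induction step
  have step : ∀ j : ℕ, 2 ≤ j → j ≤ n →
      (0 ≤ Csq (j + 1) ∧ Csq (j + 1) ≤ 1 ∧ E j ^ 2 ≤ Csq (j + 1) * μ j ^ 2) →
      (0 ≤ Csq j ∧ Csq j ≤ 1 ∧ E (j - 1) ^ 2 ≤ Csq j * μ (j - 1) ^ 2) := by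
    rintro j hj2 hjn ⟨h0, h1, hQ⟩
    have hj1 : 1 ≤ j := by omega
    have hjn1 : j - 1 ≤ n := by omega
    have hrecj := hrec j hj1 hjn
    by_cases hcase : |e j| < 1 / 2
    · rw [hrecj, if_pos hcase]
      refine ⟨zero_le_one, le_refl 1, ?_⟩
      rw [one_mul]
      exact pow_le_pow_left₀ (hEpos _) (hEμ _ hjn1) 2
    · rw [hrecj, if_neg hcase]
      have hjR : (2 : ℝ) ≤ (j : ℝ) := by exact_mod_cast hj2
      have hD : (0 : ℝ) < (j : ℝ) ^ 2 / 4 - 1 / 4 := by nlinarith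
      have habs : 1 / 2 ≤ |e j| := le_of_not_gt hcase
      have hesq : (1 : ℝ) / 4 ≤ e j ^ 2 := by
        have := sq_abs (e j)
        nlinarith [sq_nonneg (|e j| - 1 / 2)]
      have hβsq : (0 : ℝ) < β j ^ 2 := pow_pos (hβpos j) 2
      have hμsq : μ j ^ 2 ≤ (j : ℝ) ^ 2 / 4 * β j ^ 2 := by
        have h := hμβ j hj1 hjn
        nlinarith [hμpos j, hβpos j]
      have hEj := hE j hj1 hjn
      -- e j² β j² ≤ E j² ≤ Csq(j+1) μ j² ≤ Csq(j+1) (j²/4) β j²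
      have hnum : e j ^ 2 ≤ Csq (j + 1) * ((j : ℝ) ^ 2 / 4) := by
        have h1' : e j ^ 2 * β j ^ 2 ≤ Csq (j + 1) * ((j : ℝ) ^ 2 / 4) * β j ^ 2 := by
          have hEsq : 0 ≤ E (j - 1) ^ 2 := sq_nonneg _
          nlinarith [mul_le_mul_of_nonneg_left hμsq h0]
        exact le_of_mul_le_mul_right (by linarith) hβsq
      have hC0 : 0 ≤ (Csq (j + 1) * ((j : ℝ) ^ 2 / 4) - e j ^ 2) / ((j : ℝ) ^ 2 / 4 - 1 / 4) :=
        div_nonneg (by linarith) hD.le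
      have ht : 0 ≤ e j ^ 2 - Csq (j + 1) / 4 := by linarith
      have hC1 : (Csq (j + 1) * ((j : ℝ) ^ 2 / 4) - e j ^ 2) / ((j : ℝ) ^ 2 / 4 - 1 / 4) ≤ 1 := by
        rw [div_le_one hD]
        nlinarith
      refine ⟨hC0, hC1, ?_⟩
      set c : ℝ := (Csq (j + 1) * ((j : ℝ) ^ 2 / 4) - e j ^ 2) / ((j : ℝ) ^ 2 / 4 - 1 / 4) with hc
      have hcD : c * ((j : ℝ) ^ 2 / 4 - 1 / 4) = Csq (j + 1) * ((j : ℝ) ^ 2 / 4) - e j ^ 2 := by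
        rw [hc, div_mul_cancel₀ _ hD.ne']
      have hdiff : (0:ℝ) ≤ (j : ℝ) ^ 2 / 4 * β j ^ 2 - μ j ^ 2 := by linarith
      have hkey : E (j - 1) ^ 2 ≤ c * (μ j ^ 2 - 1 / 4 * β j ^ 2) := by
        rw [hEj, hc, div_mul_eq_mul_div, le_div_iff₀ hD]
        have p1 : E j ^ 2 * ((j:ℝ)^2/4 - 1/4) ≤ Csq (j+1) * μ j ^ 2 * ((j:ℝ)^2/4 - 1/4) :=
          mul_le_mul_of_nonneg_right hQ hD.le
        have p2 := mul_nonneg ht hdiff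
        have hring : (Csq (j+1) * ((j:ℝ)^2/4) - e j ^ 2) * (μ j ^ 2 - 1/4 * β j ^ 2)
            - (E j ^ 2 - e j ^ 2 * β j ^ 2) * ((j:ℝ)^2/4 - 1/4)
            = (Csq (j+1) * μ j ^ 2 * ((j:ℝ)^2/4 - 1/4) - E j ^ 2 * ((j:ℝ)^2/4 - 1/4))
              + (e j ^ 2 - Csq (j+1)/4) * ((j:ℝ)^2/4 * β j ^ 2 - μ j ^ 2) := by ring
        linarith
      calc E (j - 1) ^ 2 ≤ c * (μ j ^ 2 - 1 / 4 * β j ^ 2) := hkey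
        _ ≤ c * μ (j - 1) ^ 2 := mul_le_mul_of_nonneg_left (hμμ j hj1 hjn) hC0
  -- downward induction
  have aux : ∀ k i : ℕ, 1 ≤ i → i + k = n →
      0 ≤ Csq (i + 1) ∧ Csq (i + 1) ≤ 1 ∧ E i ^ 2 ≤ Csq (i + 1) * μ i ^ 2 := by
    intro k
    induction k with
    | zero =>
      intro i hi1 hik
      have : i = n := by omega
      subst this
      refine ⟨by rw [hCn]; norm_num, by rw [hCn], ?_⟩
      rw [hCn, one_mul]
      exact pow_le_pow_left₀ (hEpos _) (hEμ _ le_rfl) 2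
    | succ k ih =>
      intro i hi1 hik
      have hQ := ih (i + 1) (by omega) (by omega)
      have := step (i + 1) (by omega) (by omega) hQ
      simpa using this
  intro i hi2 hin
  have hQ := aux (n - (i - 1)) (i - 1) (by omega) (by omega)
  have hi11 : i - 1 + 1 = i := by omega
  rw [hi11] at hQ
  obtain ⟨hC0, hC1, hmain⟩ := hQ
  refine ⟨hmain, ?_⟩
  -- e(i-1)² β(i-1)² ≤ E(i-1)² ≤ Csq i μ(i-1)² ≤ Csq i ((i-1)/2)² β(i-1)²
  have hi1n : 1 ≤ i - 1 := by omega
  have hi1n' : i - 1 ≤ n := by omega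
  have hE' := hE (i - 1) hi1n hi1n'
  have hβsq : (0 : ℝ) < β (i - 1) ^ 2 := pow_pos (hβpos _) 2
  have hμβ' := hμβ (i - 1) hi1n hi1n'
  have hcast : ((i - 1 : ℕ) : ℝ) = (i : ℝ) - 1 := by
    have : (1 : ℕ) ≤ i := by omega
    push_cast [Nat.cast_sub this]
    ring
  rw [hcast] at hμβ'
  have hμsq : μ (i - 1) ^ 2 ≤ (((i : ℝ) - 1) / 2) ^ 2 * β (i - 1) ^ 2 := by
    have h1 : (0 : ℝ) ≤ ((i : ℝ) - 1) / 2 * β (i - 1) := le_trans (hμpos _) hμβ'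
    nlinarith [hμpos (i - 1)]
  have h2 : e (i - 1) ^ 2 * β (i - 1) ^ 2 ≤ Csq i * (((i : ℝ) - 1) / 2) ^ 2 * β (i - 1) ^ 2 := by
    have hEsq : 0 ≤ E (i - 1 - 1) ^ 2 := sq_nonneg _
    nlinarith [mul_le_mul_of_nonneg_left hμsq hC0]
  exact le_of_mul_le_mul_right (by linarith) hβsq
end

section
/- Fix 1 ≤ i < k ≤ n and suppose e_i² ≤ (i²/4)·C_{i+1}² where C_{i+1}² is the closed form from the previous lemma (with |e_j| > 1/2 for j = i+1,...,k). Then e_i² + Σ_{j=i+1}^{k} e_j²·(∏_{l=i}^{j-1} (l²/4)) / (∏_{l=i+1}^{j} (l²/4 − 1/4)) ≤ (∏_{j=i}^{k} (j²/4)) / (∏_{j=i+1}^{k} (j²/4 − 1/4)). -/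
/-- Corollary 4 of the paper: if `e_i² ≤ (i²/4)·C_{i+1}²` where `C_{i+1}²` is given by its
closed form (with `|e_j| > 1/2` for `j = i+1, …, k`), then the coefficients
`e_i, …, e_k` satisfy the ellipsoid inequality. -/
theorem stmt14 (n i k : ℕ) (e : ℕ → ℝ) (hi : 1 ≤ i) (hik : i < k) (hkn : k ≤ n)
    (habs : ∀ j, i + 1 ≤ j → j ≤ k → 1 / 2 < |e j|)
    (hbound : (e i) ^ 2 ≤ ((i : ℝ) ^ 2 / 4) *
      ((∏ j ∈ Finset.Icc (i + 1) k, (j : ℝ) ^ 2 / 4) /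
          (∏ j ∈ Finset.Icc (i + 1) k, ((j : ℝ) ^ 2 / 4 - 1 / 4))
        - ∑ j ∈ Finset.Icc (i + 2) k, (e j) ^ 2 *
            (∏ l ∈ Finset.Icc (i + 1) (j - 1), (l : ℝ) ^ 2 / 4) /
            (∏ l ∈ Finset.Icc (i + 1) j, ((l : ℝ) ^ 2 / 4 - 1 / 4))
        - (e (i + 1)) ^ 2 / (((i : ℝ) + 1) ^ 2 / 4 - 1 / 4))) :
    (e i) ^ 2 + ∑ j ∈ Finset.Icc (i + 1) k, (e j) ^ 2 *
        (∏ l ∈ Finset.Icc i (j - 1), (l : ℝ) ^ 2 / 4) /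
        (∏ l ∈ Finset.Icc (i + 1) j, ((l : ℝ) ^ 2 / 4 - 1 / 4))
      ≤ (∏ j ∈ Finset.Icc i k, (j : ℝ) ^ 2 / 4) /
        (∏ j ∈ Finset.Icc (i + 1) k, ((j : ℝ) ^ 2 / 4 - 1 / 4)) := by
  have hp : (∏ j ∈ Finset.Icc i k, (j:ℝ)^2/4)
      = ((i:ℝ)^2/4) * ∏ j ∈ Finset.Icc (i+1) k, (j:ℝ)^2/4 := by
    rw [Finset.Icc_eq_cons_Ioc (le_of_lt hik), Finset.prod_cons, Finset.Icc_add_one_left_eq_Ioc]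
  have h3 : ∀ j ∈ Finset.Icc (i+2) k,
      (e j)^2 * (∏ l ∈ Finset.Icc i (j-1), (l:ℝ)^2/4) /
        (∏ l ∈ Finset.Icc (i+1) j, ((l:ℝ)^2/4 - 1/4))
      = ((i:ℝ)^2/4) * ((e j)^2 * (∏ l ∈ Finset.Icc (i+1) (j-1), (l:ℝ)^2/4) /
        (∏ l ∈ Finset.Icc (i+1) j, ((l:ℝ)^2/4 - 1/4))) := by
    intro j hj
    have hj' := (Finset.mem_Icc.mp hj).1
    rw [Finset.Icc_eq_cons_Ioc (show i ≤ j-1 by omega), Finset.prod_cons,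
      show Finset.Ioc i (j-1) = Finset.Icc (i+1) (j-1) from (Finset.Icc_add_one_left_eq_Ioc i (j-1)).symm]
    ring
  have hs : (∑ j ∈ Finset.Icc (i+1) k, (e j)^2 *
        (∏ l ∈ Finset.Icc i (j-1), (l:ℝ)^2/4) /
        (∏ l ∈ Finset.Icc (i+1) j, ((l:ℝ)^2/4 - 1/4)))
      = (e (i+1))^2 * (((i:ℝ))^2/4) / (∏ l ∈ Finset.Icc (i+1) (i+1), ((l:ℝ)^2/4 - 1/4))
        + ((i:ℝ)^2/4) * ∑ j ∈ Finset.Icc (i+2) k, ((e j)^2 *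
            (∏ l ∈ Finset.Icc (i+1) (j-1), (l:ℝ)^2/4) /
            (∏ l ∈ Finset.Icc (i+1) j, ((l:ℝ)^2/4 - 1/4))) := by
    rw [Finset.Icc_eq_cons_Ioc hik, Finset.sum_cons,
      show Finset.Ioc (i+1) k = Finset.Icc (i+2) k from (Finset.Icc_add_one_left_eq_Ioc (i+1) k).symm,
      Finset.sum_congr rfl h3, ← Finset.mul_sum]
    congr 1
    have hx : (i+1) - 1 = i := rfl
    rw [hx]
    simp
  rw [hp, hs]
  simp only [Finset.Icc_self, Finset.prod_singleton, Nat.cast_add, Nat.cast_one]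
  set P := (∏ j ∈ Finset.Icc (i+1) k, (j:ℝ)^2/4) / ∏ j ∈ Finset.Icc (i+1) k, ((j:ℝ)^2/4 - 1/4) with hP
  set S := ∑ j ∈ Finset.Icc (i+2) k, ((e j)^2 *
      (∏ l ∈ Finset.Icc (i+1) (j-1), (l:ℝ)^2/4) /
      (∏ l ∈ Finset.Icc (i+1) j, ((l:ℝ)^2/4 - 1/4))) with hS
  set T := (e (i+1))^2 / (((i:ℝ)+1)^2/4 - 1/4) with hT
  have hA : ((i:ℝ)^2/4 * ∏ j ∈ Finset.Icc (i+1) k, (j:ℝ)^2/4) /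
      (∏ j ∈ Finset.Icc (i+1) k, ((j:ℝ)^2/4 - 1/4)) = ((i:ℝ)^2/4) * P := by
    rw [hP]; ring
  have hB : (e (i+1))^2 * ((i:ℝ)^2/4) / (((i:ℝ)+1)^2/4 - 1/4) = ((i:ℝ)^2/4) * T := by
    rw [hT]; ring
  have h5 : ((i:ℝ)^2/4)*(P - S - T)
      = ((i:ℝ)^2/4)*P - ((i:ℝ)^2/4)*S - ((i:ℝ)^2/4)*T := by ring
  rw [hA, hB]
  linarith [hbound, h5]
end
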